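/- Energy conservation of the fully implicit Scheme-4 (Theorem 2.1, case Scheme-4). Suppose f^n, f^{n+1} are phase-space functions and E^n, E^{n+1}, B^n, B^{n+1} are spatial vector fields satisfying the implicit midpoint relations: (B^{n+1} − B^n)/Δt = −∇×((E^n + E^{n+1})/2); (E^{n+1} − E^n)/Δt = ∇×((B^n + B^{n+1})/2) − (J^n + J^{n+1})/2, where J^m(x) = ∫_Ωv f^m(x,v) v dv for m = n, n+1; and (f^{n+1} − f^n)/Δt + v·∇_x ((f^n + f^{n+1})/2) + ((E^n + E^{n+1})/2 + v×(B^n + B^{n+1})/2)·∇_v ((f^n + f^{n+1})/2) = 0. Then ∫_Ωx ∫_Ωv f^{n+1} |v|² dv dx + ∫_Ωx (|E^{n+1}|² + |B^{n+1}|²) dx = ∫_Ωx ∫_Ωv f^n |v|² dv dx + ∫_Ωx (|E^n|² + |B^n|²) dx. -/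

import Mathlib

open MeasureTheory Matrix

noncomputable section

/-- Points of `ℝ³`. -/
abbrev V3 : Type := Fin 3 → ℝ

/-- Partial derivative in the `i`-th coordinate direction. -/
def pd (i : Fin 3) (g : V3 → ℝ) (x : V3) : ℝ := fderiv ℝ g x (Pi.single i 1)

/-- Curl of a vector field on `ℝ³`. -/
def curl (U : V3 → V3) (x : V3) : V3 :=
  ![pd 1 (fun y => U y 2) x - pd 2 (fun y => U y 1) x,
    pd 2 (fun y => U y 0) x - pd 0 (fun y => U y 2) x,
    pd 0 (fun y => U y 1) x - pd 1 (fun y => U y 0) x]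

/-- Gradient in the `x`-variable of a phase-space function. -/
def gradX (f : V3 → V3 → ℝ) (x v : V3) : V3 :=
  fun i => fderiv ℝ (fun y => f y v) x (Pi.single i 1)

/-- Gradient in the `v`-variable of a phase-space function. -/
def gradV (f : V3 → V3 → ℝ) (x v : V3) : V3 :=
  fun i => fderiv ℝ (fun w => f x w) v (Pi.single i 1)

/-- The period box `[0,L]³`. -/
def box (L : ℝ) : Set V3 := Set.Icc 0 (fun _ => L)

/-- A spatial vector field: smooth and `L`-periodic. -/
def IsSpatialVF (L : ℝ) (U : V3 → V3) : Prop :=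
  ContDiff ℝ (⊤ : ℕ∞) U ∧ ∀ (x : V3) (i : Fin 3), U (x + L • (Pi.single i (1:ℝ) : V3)) = U x

/-- A phase-space function: smooth, `L`-periodic in `x`, compactly supported in `v`
(uniformly in `x`). -/
def IsPhase (L : ℝ) (f : V3 → V3 → ℝ) : Prop :=
  ContDiff ℝ (⊤ : ℕ∞) (fun p : V3 × V3 => f p.1 p.2) ∧
  (∀ (x v : V3) (i : Fin 3), f (x + L • (Pi.single i (1:ℝ) : V3)) v = f x v) ∧
  ∃ R : ℝ, ∀ (x v : V3), R ≤ ‖v‖ → f x v = 0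

/-- Current density `J(x) = ∫ f(x,v) v dv`. -/
def Jcur (f : V3 → V3 → ℝ) (x : V3) : V3 := ∫ v : V3, f x v • v

/-- Kinetic energy `∫_Ωx ∫_Ωv f |v|² dv dx`. -/
def kinE (L : ℝ) (f : V3 → V3 → ℝ) : ℝ :=
  ∫ x in box L, ∫ v : V3, f x v * (v ⬝ᵥ v)

/-- Field energy `∫_Ωx |U|² dx`. -/
def fieldE (L : ℝ) (U : V3 → V3) : ℝ := ∫ x in box L, U x ⬝ᵥ U x

namespace Scheme4Aux

open Set Filter

/-! ### Basic lemmas about `pd`, `gradX`, `gradV` -/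

lemma contDiff_slice_x {f : V3 → V3 → ℝ} (hf : ContDiff ℝ (⊤ : ℕ∞) fun p : V3 × V3 => f p.1 p.2)
    (v : V3) : ContDiff ℝ (⊤ : ℕ∞) (fun y => f y v) :=
  hf.comp (contDiff_id.prodMk contDiff_const)

lemma contDiff_slice_v {f : V3 → V3 → ℝ} (hf : ContDiff ℝ (⊤ : ℕ∞) fun p : V3 × V3 => f p.1 p.2)
    (x : V3) : ContDiff ℝ (⊤ : ℕ∞) (fun w => f x w) :=
  hf.comp (contDiff_const.prodMk contDiff_id)

lemma pd_comp_proj {W : V3 → V3} {x : V3} (hW : DifferentiableAt ℝ W x) (i k : Fin 3) :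
    pd i (fun y => W y k) x = fderiv ℝ W x (Pi.single i 1) k := by
  have h : HasFDerivAt (fun y => W y k)
      ((ContinuousLinearMap.proj (R := ℝ) (φ := fun _ : Fin 3 => ℝ) k).comp (fderiv ℝ W x)) x :=
    (ContinuousLinearMap.proj (R := ℝ) (φ := fun _ : Fin 3 => ℝ) k).hasFDerivAt.comp x
      hW.hasFDerivAt
  rw [pd, h.fderiv]
  rfl

lemma continuous_pd_vec {W : V3 → V3} (hW : ContDiff ℝ (⊤ : ℕ∞) W) (i k : Fin 3) :
    Continuous fun x => pd i (fun y => W y k) x := by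
  have : (fun x => pd i (fun y => W y k) x) = fun x => fderiv ℝ W x (Pi.single i 1) k :=
    funext fun x => pd_comp_proj (hW.differentiable (by simp) x) i k
  rw [this]
  exact (continuous_apply k).comp ((hW.continuous_fderiv (by simp)).clm_apply continuous_const)

lemma continuous_curl {U : V3 → V3} (hU : ContDiff ℝ (⊤ : ℕ∞) U) :
    Continuous fun x => curl U x := by
  refine continuous_pi fun k => ?_
  fin_cases k <;> simp only [curl, Matrix.cons_val_zero, Matrix.cons_val_one, Matrix.head_cons,
    Matrix.cons_val_two, Matrix.tail_cons, Fin.isValue] <;>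
    exact (continuous_pd_vec hU _ _).sub (continuous_pd_vec hU _ _)

lemma continuous_dot {α : Type*} [TopologicalSpace α] {u w : α → V3}
    (hu : Continuous u) (hw : Continuous w) : Continuous fun a => u a ⬝ᵥ w a := by
  simp only [dotProduct]
  exact continuous_finset_sum _ fun i _ =>
    ((continuous_apply i).comp hu).mul ((continuous_apply i).comp hw)

lemma continuous_cross {α : Type*} [TopologicalSpace α] {u w : α → V3}
    (hu : Continuous u) (hw : Continuous w) :
    Continuous fun a => (crossProduct (u a) (w a) : V3) := by
  refine continuous_pi fun k => ?_
  fin_cases k <;> simp only [cross_apply, Matrix.cons_val_zero, Matrix.cons_val_one,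
      Matrix.head_cons, Matrix.cons_val_two, Matrix.tail_cons, Fin.isValue] <;>
    exact (((continuous_apply _).comp hu).mul ((continuous_apply _).comp hw)).sub
      (((continuous_apply _).comp hu).mul ((continuous_apply _).comp hw))

lemma contDiff_cross_const (c : V3) : ContDiff ℝ (⊤ : ℕ∞) fun v : V3 => (crossProduct v c : V3) := by
  refine contDiff_pi.2 fun k => ?_
  have hp : ∀ j : Fin 3, ContDiff ℝ (⊤ : ℕ∞) fun v : V3 => v j := fun j =>
    (ContinuousLinearMap.proj (R := ℝ) (φ := fun _ : Fin 3 => ℝ) j).contDiff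
  fin_cases k <;> simp only [cross_apply, Matrix.cons_val_zero, Matrix.cons_val_one,
      Matrix.head_cons, Matrix.cons_val_two, Matrix.tail_cons, Fin.isValue] <;>
    exact ((hp _).mul contDiff_const).sub ((hp _).mul contDiff_const)

lemma contDiff_dot_self : ContDiff ℝ (⊤ : ℕ∞) fun v : V3 => v ⬝ᵥ v := by
  simp only [dotProduct]
  refine ContDiff.sum fun i _ => ?_
  exact ((ContinuousLinearMap.proj (R := ℝ) (φ := fun _ : Fin 3 => ℝ) i).contDiff).mul
    ((ContinuousLinearMap.proj (R := ℝ) (φ := fun _ : Fin 3 => ℝ) i).contDiff)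

lemma gradX_apply_fderiv {f : V3 → V3 → ℝ}
    (hf : ContDiff ℝ (⊤ : ℕ∞) fun p : V3 × V3 => f p.1 p.2) (x v : V3) (i : Fin 3) :
    gradX f x v i
      = fderiv ℝ (fun p : V3 × V3 => f p.1 p.2) (x, v) ((Pi.single i 1 : V3), 0) := by
  have h1 : HasFDerivAt (fun y : V3 => (y, v)) (ContinuousLinearMap.inl ℝ V3 V3) x :=
    hasFDerivAt_prodMk_left x v
  have h2 := ((hf.differentiable (by simp) (x, v)).hasFDerivAt).comp x h1
  have h3 : fderiv ℝ (fun y => f y v) x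
      = (fderiv ℝ (fun p : V3 × V3 => f p.1 p.2) (x, v)).comp
          (ContinuousLinearMap.inl ℝ V3 V3) := h2.fderiv
  simp [gradX, h3]

lemma gradV_apply_fderiv {f : V3 → V3 → ℝ}
    (hf : ContDiff ℝ (⊤ : ℕ∞) fun p : V3 × V3 => f p.1 p.2) (x v : V3) (i : Fin 3) :
    gradV f x v i
      = fderiv ℝ (fun p : V3 × V3 => f p.1 p.2) (x, v) (0, (Pi.single i 1 : V3)) := by
  have h1 : HasFDerivAt (fun w : V3 => (x, w)) (ContinuousLinearMap.inr ℝ V3 V3) v :=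
    hasFDerivAt_prodMk_right x v
  have h2 := ((hf.differentiable (by simp) (x, v)).hasFDerivAt).comp v h1
  have h3 : fderiv ℝ (fun w => f x w) v
      = (fderiv ℝ (fun p : V3 × V3 => f p.1 p.2) (x, v)).comp
          (ContinuousLinearMap.inr ℝ V3 V3) := h2.fderiv
  simp [gradV, h3]

lemma continuous_gradX {f : V3 → V3 → ℝ}
    (hf : ContDiff ℝ (⊤ : ℕ∞) fun p : V3 × V3 => f p.1 p.2) (i : Fin 3) :
    Continuous fun p : V3 × V3 => gradX f p.1 p.2 i := by
  have : (fun p : V3 × V3 => gradX f p.1 p.2 i) = fun p : V3 × V3 =>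
      fderiv ℝ (fun p : V3 × V3 => f p.1 p.2) p ((Pi.single i 1 : V3), 0) := by
    funext p
    rw [gradX_apply_fderiv hf p.1 p.2 i]
  rw [this]
  exact (hf.continuous_fderiv (by simp)).clm_apply continuous_const

lemma continuous_gradV {f : V3 → V3 → ℝ}
    (hf : ContDiff ℝ (⊤ : ℕ∞) fun p : V3 × V3 => f p.1 p.2) (i : Fin 3) :
    Continuous fun p : V3 × V3 => gradV f p.1 p.2 i := by
  have : (fun p : V3 × V3 => gradV f p.1 p.2 i) = fun p : V3 × V3 =>
      fderiv ℝ (fun p : V3 × V3 => f p.1 p.2) p (0, (Pi.single i 1 : V3)) := by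
    funext p
    rw [gradV_apply_fderiv hf p.1 p.2 i]
  rw [this]
  exact (hf.continuous_fderiv (by simp)).clm_apply continuous_const

end Scheme4Aux
namespace Scheme4Aux

open Set Filter

/-! ### `pd` calculus -/

lemma pd_add {g h : V3 → ℝ} {x : V3} (hg : DifferentiableAt ℝ g x)
    (hh : DifferentiableAt ℝ h x) (i : Fin 3) :
    pd i (fun y => g y + h y) x = pd i g x + pd i h x := by
  simp [pd, fderiv_fun_add hg hh]

lemma pd_sub {g h : V3 → ℝ} {x : V3} (hg : DifferentiableAt ℝ g x)
    (hh : DifferentiableAt ℝ h x) (i : Fin 3) :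
    pd i (fun y => g y - h y) x = pd i g x - pd i h x := by
  simp [pd, fderiv_fun_sub hg hh]

lemma pd_mul {g h : V3 → ℝ} {x : V3} (hg : DifferentiableAt ℝ g x)
    (hh : DifferentiableAt ℝ h x) (i : Fin 3) :
    pd i (fun y => g y * h y) x = pd i g x * h x + g x * pd i h x := by
  simp only [pd, fderiv_fun_mul hg hh, ContinuousLinearMap.add_apply,
    ContinuousLinearMap.smul_apply, smul_eq_mul]
  ring

lemma pd_const {x : V3} (c : ℝ) (i : Fin 3) : pd i (fun _ => c) x = 0 := by
  simp [pd]

lemma pd_mul_const {g : V3 → ℝ} {x : V3} (hg : DifferentiableAt ℝ g x) (c : ℝ) (i : Fin 3) :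
    pd i (fun y => g y * c) x = pd i g x * c := by
  simp only [pd, fderiv_mul_const hg, ContinuousLinearMap.smul_apply, smul_eq_mul]
  ring

lemma pd_const_mul {g : V3 → ℝ} {x : V3} (hg : DifferentiableAt ℝ g x) (c : ℝ) (i : Fin 3) :
    pd i (fun y => c * g y) x = c * pd i g x := by
  simp only [pd, fderiv_const_mul hg c, ContinuousLinearMap.smul_apply, smul_eq_mul]

lemma pd_dot_self (i : Fin 3) (v : V3) : pd i (fun w : V3 => w ⬝ᵥ w) v = 2 * v i := by
  have hp : ∀ j : Fin 3, DifferentiableAt ℝ (fun w : V3 => w j) v := fun j =>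
    ((ContinuousLinearMap.proj (R := ℝ) (φ := fun _ : Fin 3 => ℝ) j).differentiable v)
  have hj : ∀ j : Fin 3, pd i (fun w : V3 => w j) v = (Pi.single i (1:ℝ) : V3) j := by
    intro j
    have h : HasFDerivAt (fun w : V3 => w j)
        (ContinuousLinearMap.proj (R := ℝ) (φ := fun _ : Fin 3 => ℝ) j) v :=
      (ContinuousLinearMap.proj (R := ℝ) (φ := fun _ : Fin 3 => ℝ) j).hasFDerivAt
    rw [pd, h.fderiv]
    rfl
  have : (fun w : V3 => w ⬝ᵥ w) = fun w : V3 => (w 0 * w 0 + w 1 * w 1) + w 2 * w 2 := by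
    funext w
    simp [dotProduct, Fin.sum_univ_three]
  rw [this, pd_add (((hp 0).fun_mul (hp 0)).fun_add ((hp 1).fun_mul (hp 1))) ((hp 2).fun_mul (hp 2)),
    pd_add ((hp 0).fun_mul (hp 0)) ((hp 1).fun_mul (hp 1)),
    pd_mul (hp 0) (hp 0), pd_mul (hp 1) (hp 1), pd_mul (hp 2) (hp 2), hj 0, hj 1, hj 2]
  fin_cases i <;> simp [Pi.single_apply] <;> ring

lemma pd_cross_const (D : V3) (i k : Fin 3) (v : V3) :
    pd i (fun w : V3 => (crossProduct w D : V3) k) v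
      = (crossProduct (Pi.single i 1 : V3) D : V3) k := by
  set M : V3 →L[ℝ] V3 :=
    LinearMap.toContinuousLinearMap ((crossProduct (R := ℝ)).flip D) with hM
  have h1 : (fun w : V3 => (crossProduct w D : V3) k) = fun w => (M w) k := rfl
  have h2 : HasFDerivAt (fun w : V3 => M w) M v := M.hasFDerivAt
  rw [h1, pd_comp_proj (M.differentiable v) i k, h2.fderiv]
  rfl

lemma diffAt_comp_proj {U : V3 → V3} (hU : ContDiff ℝ (⊤ : ℕ∞) U) (k : Fin 3) (x : V3) :
    DifferentiableAt ℝ (fun y => U y k) x :=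
  ((ContinuousLinearMap.proj (R := ℝ) (φ := fun _ : Fin 3 => ℝ) k).differentiable.comp
    (hU.differentiable (by simp))) x

end Scheme4Aux
namespace Scheme4Aux

open Set Filter

/-! ### Divergence theorems -/

lemma integral_div_box (a b : V3) (hab : a ≤ b) (W : V3 → V3) (hW : ContDiff ℝ (⊤ : ℕ∞) W) :
    (∫ x in Set.Icc a b, ∑ i, pd i (fun y => W y i) x)
      = ∑ i : Fin 3,
          ((∫ x in Set.Icc (a ∘ i.succAbove) (b ∘ i.succAbove), W (i.insertNth (b i) x) i)
            - ∫ x in Set.Icc (a ∘ i.succAbove) (b ∘ i.succAbove), W (i.insertNth (a i) x) i) := by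
  have hd : Differentiable ℝ W := hW.differentiable (by simp)
  have hcont : Continuous fun x : V3 => ∑ i, fderiv ℝ W x (Pi.single i 1) i :=
    continuous_finset_sum _ fun i _ =>
      (continuous_apply i).comp ((hW.continuous_fderiv (by simp)).clm_apply continuous_const)
  have key := MeasureTheory.integral_divergence_of_hasFDerivAt_off_countable
    (n := 2) a b hab W (fun x => fderiv ℝ W x) ∅ countable_empty
    hW.continuous.continuousOn (fun x _ => (hd x).hasFDerivAt)
    (hcont.continuousOn.integrableOn_compact isCompact_Icc)
  have heq : (fun x : V3 => ∑ i, pd i (fun y => W y i) x)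
      = fun x : V3 => ∑ i, fderiv ℝ W x (Pi.single i 1) i := by
    funext x
    exact Finset.sum_congr rfl fun i _ => pd_comp_proj (hd x) i i
  rw [heq]
  exact key

lemma integral_div_box_periodic {L : ℝ} (hL : 0 ≤ L) (W : V3 → V3) (hW : ContDiff ℝ (⊤ : ℕ∞) W)
    (hper : ∀ (x : V3) (i : Fin 3), W (x + L • (Pi.single i (1:ℝ) : V3)) = W x) :
    (∫ x in box L, ∑ i, pd i (fun y => W y i) x) = 0 := by
  have hab : (0 : V3) ≤ fun _ => L := fun i => hL
  rw [box, integral_div_box 0 (fun _ => L) hab W hW]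
  refine Finset.sum_eq_zero fun i _ => ?_
  rw [sub_eq_zero]
  refine MeasureTheory.setIntegral_congr_fun measurableSet_Icc fun y _ => ?_
  have hpt : i.insertNth ((fun _ => L) i) y
      = i.insertNth ((0 : V3) i) y + L • (Pi.single i (1:ℝ) : V3) := by
    funext j
    refine Fin.succAboveCases i ?_ ?_ j
    · simp [Fin.insertNth_apply_same]
    · intro j
      simp [Fin.insertNth_apply_succAbove, Pi.single_eq_of_ne (Fin.succAbove_ne i j)]
  rw [hpt, hper]

lemma integral_div_compact (W : V3 → V3) (hW : ContDiff ℝ (⊤ : ℕ∞) W)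
    (hsupp : HasCompactSupport W) :
    (∫ v : V3, ∑ i, pd i (fun y => W y i) v) = 0 := by
  obtain ⟨R, hR⟩ := hsupp.isBounded.subset_closedBall 0
  set a : V3 := fun _ => -(|R| + 1) with ha
  set b : V3 := fun _ => |R| + 1 with hb
  have hab : a ≤ b := fun i => by
    simp only [ha, hb]
    have : (0:ℝ) ≤ |R| := abs_nonneg R
    linarith
  have hWz : ∀ y : V3, |R| < ‖y‖ → W y = 0 := by
    intro y hy
    refine image_eq_zero_of_notMem_tsupport fun hmem => ?_
    have h1 : ‖y‖ ≤ R := by simpa [dist_zero_right] using hR hmem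
    have h2 : R ≤ |R| := le_abs_self R
    linarith
  have hdiv0 : ∀ x : V3, x ∉ Set.Icc a b → (∑ i, pd i (fun y => W y i) x) = 0 := by
    intro x hx
    have hnorm : |R| + 1 ≤ ‖x‖ := by
      by_contra hcon
      push_neg at hcon
      refine hx ⟨fun i => ?_, fun i => ?_⟩
      · have := (abs_le.1 (le_of_lt (lt_of_le_of_lt (norm_le_pi_norm x i) hcon))).1
        simpa [ha] using this
      · have := (abs_le.1 (le_of_lt (lt_of_le_of_lt (norm_le_pi_norm x i) hcon))).2
        simpa [hb] using this
    have hev : W =ᶠ[nhds x] fun _ => (0 : V3) := by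
      have hopen : IsOpen {y : V3 | |R| < ‖y‖} := isOpen_lt continuous_const continuous_norm
      refine Filter.eventuallyEq_of_mem (hopen.mem_nhds ?_) fun y hy => hWz y hy
      simp only [Set.mem_setOf_eq]; linarith
    refine Finset.sum_eq_zero fun i _ => ?_
    have hevi : (fun y => W y i) =ᶠ[nhds x] fun _ => (0 : ℝ) :=
      hev.mono fun y hy => congrFun hy i
    rw [pd, hevi.fderiv_eq]
    simp
  have hstep : (∫ v : V3, ∑ i, pd i (fun y => W y i) v)
      = ∫ v in Set.Icc a b, ∑ i, pd i (fun y => W y i) v :=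
    (MeasureTheory.setIntegral_eq_integral_of_forall_compl_eq_zero hdiv0).symm
  rw [hstep, integral_div_box a b hab W hW]
  refine Finset.sum_eq_zero fun i _ => ?_
  have hface : ∀ (c : ℝ), |c| = |R| + 1 →
      ∀ y : Fin 2 → ℝ, W (i.insertNth c y) i = 0 := by
    intro c hc y
    refine congrFun (hWz _ ?_) i
    have h1 : |(i.insertNth c y : V3) i| ≤ ‖(i.insertNth c y : V3)‖ := by
      simpa using norm_le_pi_norm (i.insertNth c y : V3) i
    rw [Fin.insertNth_apply_same] at h1
    rw [hc] at h1
    linarith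
  have h1 : |b i| = |R| + 1 := by
    simp only [hb]
    rw [abs_of_nonneg (by positivity)]
  have h2 : |a i| = |R| + 1 := by
    simp only [ha]
    rw [abs_neg, abs_of_nonneg (by positivity)]
  rw [MeasureTheory.setIntegral_congr_fun measurableSet_Icc fun y _ => hface _ h1 y,
    MeasureTheory.setIntegral_congr_fun measurableSet_Icc fun y _ => hface _ h2 y]
  simp

end Scheme4Aux
namespace Scheme4Aux

open Set Filter

/-! ### Integrability over the product measure, and Fubini -/

lemma integrableP {L R : ℝ} (g : V3 × V3 → ℝ) (hg : Continuous g)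
    (h0 : ∀ x v : V3, R ≤ ‖v‖ → g (x, v) = 0) :
    MeasureTheory.Integrable g
      (((MeasureTheory.volume : MeasureTheory.Measure V3).restrict (box L)).prod
        MeasureTheory.volume) := by
  have hmeq : ((MeasureTheory.volume : MeasureTheory.Measure V3).restrict (box L)).prod
        (MeasureTheory.volume : MeasureTheory.Measure V3)
      = (MeasureTheory.volume : MeasureTheory.Measure (V3 × V3)).restrict
          (box L ×ˢ (Set.univ : Set V3)) := by
    rw [MeasureTheory.Measure.volume_eq_prod, ← MeasureTheory.Measure.prod_restrict,
      MeasureTheory.Measure.restrict_univ]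
  rw [hmeq]
  have hK : IsCompact ((box L) ×ˢ Metric.closedBall (0 : V3) R) :=
    isCompact_Icc.prod (isCompact_closedBall _ _)
  have h1 : MeasureTheory.IntegrableOn g ((box L) ×ˢ Metric.closedBall (0 : V3) R) :=
    hg.continuousOn.integrableOn_compact hK
  refine h1.of_forall_diff_eq_zero (measurableSet_Icc.prod MeasurableSet.univ) fun p hp => ?_
  obtain ⟨⟨hp1, _⟩, hp2⟩ := hp
  refine h0 p.1 p.2 ?_
  by_contra hcon
  push_neg at hcon
  exact hp2 ⟨hp1, by simpa [Metric.mem_closedBall, dist_zero_right] using hcon.le⟩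

lemma integrable_v {R : ℝ} {E : Type*} [NormedAddCommGroup E] (g : V3 → E)
    (hg : Continuous g) (h0 : ∀ v : V3, R ≤ ‖v‖ → g v = 0) :
    MeasureTheory.Integrable g := by
  refine hg.integrable_of_hasCompactSupport
    (HasCompactSupport.intro (isCompact_closedBall (0 : V3) R) fun v hv => ?_)
  refine h0 v ?_
  by_contra hcon
  push_neg at hcon
  exact hv (by simpa [Metric.mem_closedBall, dist_zero_right] using hcon.le)

/-! ### Divergence of a cross product -/

lemma div_cross (Uu Vv : V3 → V3) (hU : ContDiff ℝ (⊤ : ℕ∞) Uu) (hV : ContDiff ℝ (⊤ : ℕ∞) Vv) (x : V3) :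
    ∑ i : Fin 3, pd i (fun y => (crossProduct (Uu y) (Vv y) : V3) i) x
      = Vv x ⬝ᵥ curl Uu x - Uu x ⬝ᵥ curl Vv x := by
  have hu : ∀ (k : Fin 3) (z : V3), DifferentiableAt ℝ (fun y => Uu y k) z :=
    fun k z => diffAt_comp_proj hU k z
  have hv : ∀ (k : Fin 3) (z : V3), DifferentiableAt ℝ (fun y => Vv y k) z :=
    fun k z => diffAt_comp_proj hV k z
  have e0 : (fun y => (crossProduct (Uu y) (Vv y) : V3) 0)
      = fun y => Uu y 1 * Vv y 2 - Uu y 2 * Vv y 1 := by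
    funext y; simp [cross_apply]
  have e1 : (fun y => (crossProduct (Uu y) (Vv y) : V3) 1)
      = fun y => Uu y 2 * Vv y 0 - Uu y 0 * Vv y 2 := by
    funext y; simp [cross_apply]
  have e2 : (fun y => (crossProduct (Uu y) (Vv y) : V3) 2)
      = fun y => Uu y 0 * Vv y 1 - Uu y 1 * Vv y 0 := by
    funext y; simp [cross_apply]
  rw [Fin.sum_univ_three, e0, e1, e2,
    pd_sub ((hu 1 x).fun_mul (hv 2 x)) ((hu 2 x).fun_mul (hv 1 x)),
    pd_sub ((hu 2 x).fun_mul (hv 0 x)) ((hu 0 x).fun_mul (hv 2 x)),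
    pd_sub ((hu 0 x).fun_mul (hv 1 x)) ((hu 1 x).fun_mul (hv 0 x)),
    pd_mul (hu 1 x) (hv 2 x), pd_mul (hu 2 x) (hv 1 x),
    pd_mul (hu 2 x) (hv 0 x), pd_mul (hu 0 x) (hv 2 x),
    pd_mul (hu 0 x) (hv 1 x), pd_mul (hu 1 x) (hv 0 x)]
  simp only [curl, dotProduct, Fin.sum_univ_three, Matrix.cons_val_zero, Matrix.cons_val_one,
    Matrix.head_cons, Matrix.cons_val_two, Matrix.tail_cons]
  ring

end Scheme4Aux
namespace Scheme4Aux

open Set Filter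

lemma contDiff_comp_proj {U : V3 → V3} (hU : ContDiff ℝ (⊤ : ℕ∞) U) (k : Fin 3) :
    ContDiff ℝ (⊤ : ℕ∞) (fun y => U y k) :=
  (ContinuousLinearMap.proj (R := ℝ) (φ := fun _ : Fin 3 => ℝ) k).contDiff.comp hU

lemma contDiff_cross {u w : V3 → V3} (hu : ContDiff ℝ (⊤ : ℕ∞) u) (hw : ContDiff ℝ (⊤ : ℕ∞) w) :
    ContDiff ℝ (⊤ : ℕ∞) fun a => (crossProduct (u a) (w a) : V3) := by
  refine contDiff_pi.2 fun k => ?_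
  fin_cases k <;> simp only [cross_apply, Matrix.cons_val_zero, Matrix.cons_val_one,
      Matrix.head_cons, Matrix.cons_val_two, Matrix.tail_cons, Fin.isValue] <;>
    exact ((contDiff_comp_proj hu _).mul (contDiff_comp_proj hw _)).sub
      ((contDiff_comp_proj hu _).mul (contDiff_comp_proj hw _))

end Scheme4Aux
open Scheme4Aux in
/-- Energy conservation of the fully implicit Scheme-4 (Theorem 2.1, case Scheme-4). -/
theorem scheme4_energy_conservation
    (L Δt : ℝ) (hL : 0 < L) (hΔt : 0 < Δt)
    (f0 f1 : V3 → V3 → ℝ) (En E1 Bn B1 : V3 → V3)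
    (hf0 : IsPhase L f0) (hf1 : IsPhase L f1)
    (hEn : IsSpatialVF L En) (hE1 : IsSpatialVF L E1)
    (hBn : IsSpatialVF L Bn) (hB1 : IsSpatialVF L B1)
    (hFaraday : ∀ x : V3,
      Δt⁻¹ • (B1 x - Bn x) = - curl (fun y => (2:ℝ)⁻¹ • (En y + E1 y)) x)
    (hAmpere : ∀ x : V3,
      Δt⁻¹ • (E1 x - En x)
        = curl (fun y => (2:ℝ)⁻¹ • (Bn y + B1 y)) x
          - (2:ℝ)⁻¹ • (Jcur f0 x + Jcur f1 x))
    (hVlasov : ∀ x v : V3,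
      (f1 x v - f0 x v) / Δt
        + v ⬝ᵥ gradX (fun y w => (f0 y w + f1 y w) / 2) x v
        + ((2:ℝ)⁻¹ • (En x + E1 x) + crossProduct v ((2:ℝ)⁻¹ • (Bn x + B1 x)))
            ⬝ᵥ gradV (fun y w => (f0 y w + f1 y w) / 2) x v = 0) :
    kinE L f1 + (fieldE L E1 + fieldE L B1)
      = kinE L f0 + (fieldE L En + fieldE L Bn) := by
  classical
  obtain ⟨hf0s, hf0p, R0, hR0⟩ := hf0
  obtain ⟨hf1s, hf1p, R1, hR1⟩ := hf1
  obtain ⟨hEns, hEnp⟩ := hEn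
  obtain ⟨hE1s, hE1p⟩ := hE1
  obtain ⟨hBns, hBnp⟩ := hBn
  obtain ⟨hB1s, hB1p⟩ := hB1
  set F : V3 → V3 → ℝ := fun y w => (f0 y w + f1 y w) / 2 with hFdef
  set Eb : V3 → V3 := fun y => (2:ℝ)⁻¹ • (En y + E1 y) with hEbdef
  set Bb : V3 → V3 := fun y => (2:ℝ)⁻¹ • (Bn y + B1 y) with hBbdef
  set Rm : ℝ := max R0 R1 with hRmdef
  -- basic smoothness facts
  have hFs : ContDiff ℝ (⊤ : ℕ∞) (fun p : V3 × V3 => F p.1 p.2) := by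
    rw [hFdef]; exact (hf0s.add hf1s).div_const 2
  have hEbs : ContDiff ℝ (⊤ : ℕ∞) Eb := by rw [hEbdef]; exact (hEns.add hE1s).const_smul _
  have hBbs : ContDiff ℝ (⊤ : ℕ∞) Bb := by rw [hBbdef]; exact (hBns.add hB1s).const_smul _
  have hEbp : ∀ (x : V3) (i : Fin 3), Eb (x + L • (Pi.single i (1:ℝ) : V3)) = Eb x := by
    intro x i; simp only [hEbdef]; rw [hEnp x i, hE1p x i]
  have hBbp : ∀ (x : V3) (i : Fin 3), Bb (x + L • (Pi.single i (1:ℝ) : V3)) = Bb x := by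
    intro x i; simp only [hBbdef]; rw [hBnp x i, hB1p x i]
  have hFp : ∀ (x v : V3) (i : Fin 3), F (x + L • (Pi.single i (1:ℝ) : V3)) v = F x v := by
    intro x v i; simp only [hFdef]; rw [hf0p x v i, hf1p x v i]
  -- support facts
  have hFz : ∀ x v : V3, Rm ≤ ‖v‖ → F x v = 0 := by
    intro x v hv
    show (f0 x v + f1 x v) / 2 = 0
    rw [hR0 x v (le_trans (le_max_left _ _) hv), hR1 x v (le_trans (le_max_right _ _) hv)]
    norm_num
  have hgXz : ∀ x v : V3, Rm ≤ ‖v‖ → gradX F x v = 0 := by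
    intro x v hv
    funext i
    have h : (fun y => F y v) = fun _ => (0:ℝ) := funext fun y => hFz y v hv
    show fderiv ℝ (fun y => F y v) x (Pi.single i 1) = 0
    rw [h]
    simp
  have hgVz : ∀ x v : V3, Rm + 1 ≤ ‖v‖ → gradV F x v = 0 := by
    intro x v hv
    funext i
    have hev : (fun w => F x w) =ᶠ[nhds v] fun _ => (0:ℝ) := by
      have hopen : IsOpen {w : V3 | Rm < ‖w‖} := isOpen_lt continuous_const continuous_norm
      refine Filter.eventuallyEq_of_mem (hopen.mem_nhds ?_) fun w hw => hFz x w (le_of_lt hw)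
      simp only [Set.mem_setOf_eq]; linarith
    show fderiv ℝ (fun w => F x w) v (Pi.single i 1) = 0
    rw [hev.fderiv_eq]
    simp
  -- the measures
  set μb : MeasureTheory.Measure V3 := MeasureTheory.volume.restrict (box L) with hμb
  set P : MeasureTheory.Measure (V3 × V3) := μb.prod MeasureTheory.volume with hP
  have hintb : ∀ g : V3 → ℝ, Continuous g → MeasureTheory.Integrable g μb := fun g hg =>
    hg.continuousOn.integrableOn_compact (isCompact_Icc : IsCompact (box L))
  -- the two transport terms
  set A : V3 × V3 → ℝ := fun p => (p.2 ⬝ᵥ gradX F p.1 p.2) * (p.2 ⬝ᵥ p.2) with hAdef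
  set Bf : V3 × V3 → ℝ := fun p =>
    ((Eb p.1 + (crossProduct p.2 (Bb p.1) : V3)) ⬝ᵥ gradV F p.1 p.2) * (p.2 ⬝ᵥ p.2) with hBfdef
  have hcA : Continuous A := by
    rw [hAdef]
    exact (continuous_dot continuous_snd
      (continuous_pi fun i => continuous_gradX hFs i)).mul
      (continuous_dot continuous_snd continuous_snd)
  have hcB : Continuous Bf := by
    rw [hBfdef]
    refine (continuous_dot ?_ (continuous_pi fun i => continuous_gradV hFs i)).mul
      (continuous_dot continuous_snd continuous_snd)
    exact (hEbs.continuous.comp continuous_fst).add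
      (continuous_cross continuous_snd (hBbs.continuous.comp continuous_fst))
  have hA0 : ∀ x v : V3, Rm + 1 ≤ ‖v‖ → A (x, v) = 0 := by
    intro x v hv
    simp only [hAdef]
    rw [hgXz x v (by linarith)]
    simp
  have hB0 : ∀ x v : V3, Rm + 1 ≤ ‖v‖ → Bf (x, v) = 0 := by
    intro x v hv
    simp only [hBfdef]
    rw [hgVz x v hv]
    simp
  have hiA : MeasureTheory.Integrable A P := integrableP (R := Rm + 1) A hcA hA0
  have hiB : MeasureTheory.Integrable Bf P := integrableP (R := Rm + 1) Bf hcB hB0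
  have hg0 : MeasureTheory.Integrable (fun p : V3 × V3 => f0 p.1 p.2 * (p.2 ⬝ᵥ p.2)) P :=
    integrableP (R := R0) _ (hf0s.continuous.mul (continuous_dot continuous_snd continuous_snd))
      (fun x v hv => by rw [hR0 x v hv]; ring)
  have hg1 : MeasureTheory.Integrable (fun p : V3 × V3 => f1 p.1 p.2 * (p.2 ⬝ᵥ p.2)) P :=
    integrableP (R := R1) _ (hf1s.continuous.mul (continuous_dot continuous_snd continuous_snd))
      (fun x v hv => by rw [hR1 x v hv]; ring)
  -- pointwise Vlasov consequence
  have hEbx : ∀ y : V3, (2:ℝ)⁻¹ • (En y + E1 y) = Eb y := fun _ => rfl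
  have hBbx : ∀ y : V3, (2:ℝ)⁻¹ • (Bn y + B1 y) = Bb y := fun _ => rfl
  have hpt : ∀ x v : V3,
      f1 x v * (v ⬝ᵥ v) - f0 x v * (v ⬝ᵥ v) = -Δt * A (x, v) + -Δt * Bf (x, v) := by
    intro x v
    have h := hVlasov x v
    rw [hEbx, hBbx] at h
    have h' : f1 x v - f0 x v
        = -Δt * ((v ⬝ᵥ gradX F x v)
            + ((Eb x + (crossProduct v (Bb x) : V3)) ⬝ᵥ gradV F x v)) := by
      have h2 : Δt * ((f1 x v - f0 x v) / Δt) + Δt * (v ⬝ᵥ gradX F x v)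
          + Δt * ((Eb x + (crossProduct v (Bb x) : V3)) ⬝ᵥ gradV F x v) = 0 := by
        rw [← mul_add, ← mul_add, h, mul_zero]
      have h3 : Δt * ((f1 x v - f0 x v) / Δt) = f1 x v - f0 x v := by
        rw [mul_comm, div_mul_cancel₀ _ hΔt.ne']
      linarith
    simp only [hAdef, hBfdef]
    linear_combination (v ⬝ᵥ v) * h'
  -- kinetic energies as product integrals
  have hkin1 : kinE L f1 = ∫ p, f1 p.1 p.2 * (p.2 ⬝ᵥ p.2) ∂P :=
    (MeasureTheory.integral_prod _ hg1).symm
  have hkin0 : kinE L f0 = ∫ p, f0 p.1 p.2 * (p.2 ⬝ᵥ p.2) ∂P :=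
    (MeasureTheory.integral_prod _ hg0).symm
  have hkdiff : kinE L f1 - kinE L f0
      = -Δt * (∫ p, A p ∂P) + -Δt * (∫ p, Bf p ∂P) := by
    rw [hkin1, hkin0, ← MeasureTheory.integral_sub hg1 hg0]
    have heq : (fun p : V3 × V3 => f1 p.1 p.2 * (p.2 ⬝ᵥ p.2) - f0 p.1 p.2 * (p.2 ⬝ᵥ p.2))
        = fun p => -Δt * A p + -Δt * Bf p := funext fun p => hpt p.1 p.2
    rw [heq, MeasureTheory.integral_add (hiA.const_mul _) (hiB.const_mul _),
      MeasureTheory.integral_const_mul, MeasureTheory.integral_const_mul]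
  -- the x-transport term vanishes
  have hAint : (∫ p, A p ∂P) = 0 := by
    rw [MeasureTheory.integral_prod_symm _ hiA]
    have hAx : ∀ v : V3, (∫ x, A (x, v) ∂μb) = 0 := by
      intro v
      have hFd : ∀ x : V3, DifferentiableAt ℝ (fun y => F y v) x :=
        fun x => ((contDiff_slice_x hFs v).differentiable (by simp)) x
      have hWs : ContDiff ℝ (⊤ : ℕ∞) (fun x : V3 => (F x v * (v ⬝ᵥ v)) • v) :=
        ((contDiff_slice_x hFs v).mul contDiff_const).smul contDiff_const
      have hWp : ∀ (x : V3) (i : Fin 3),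
          (fun x : V3 => (F x v * (v ⬝ᵥ v)) • v) (x + L • (Pi.single i (1:ℝ) : V3))
            = (fun x : V3 => (F x v * (v ⬝ᵥ v)) • v) x := by
        intro x i
        simp only []
        rw [hFp x v i]
      have hdiv := integral_div_box_periodic hL.le _ hWs hWp
      have hptw : ∀ x : V3,
          (∑ i : Fin 3, pd i (fun y => ((F y v * (v ⬝ᵥ v)) • v) i) x) = A (x, v) := by
        intro x
        have hci : ∀ i : Fin 3, (fun y => ((F y v * (v ⬝ᵥ v)) • v) i)
            = fun y => F y v * ((v ⬝ᵥ v) * v i) := by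
          intro i
          funext y
          simp [mul_assoc]
        have hmc : ∀ i : Fin 3, pd i (fun y => F y v * ((v ⬝ᵥ v) * v i)) x
            = pd i (fun y => F y v) x * ((v ⬝ᵥ v) * v i) :=
          fun i => pd_mul_const (hFd x) _ i
        have hgx : ∀ i : Fin 3, pd i (fun y => F y v) x = gradX F x v i := fun i => rfl
        rw [Fin.sum_univ_three, hci 0, hci 1, hci 2, hmc 0, hmc 1, hmc 2, hgx 0, hgx 1, hgx 2]
        simp only [hAdef, dotProduct, Fin.sum_univ_three]
        ring
      rw [funext hptw] at hdiv
      rw [← hμb] at hdiv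
      exact hdiv
    rw [funext hAx]
    simp
  -- the v-transport term
  have hq : Differentiable ℝ (fun w : V3 => w ⬝ᵥ w) := contDiff_dot_self.differentiable (by simp)
  have hBx : ∀ x : V3, (∫ v, Bf (x, v)) = -(Eb x ⬝ᵥ (Jcur f0 x + Jcur f1 x)) := by
    intro x
    have hFv : Differentiable ℝ (fun w => F x w) :=
      (contDiff_slice_v hFs x).differentiable (by simp)
    set G : V3 → V3 := fun w => (F x w * (w ⬝ᵥ w)) • (Eb x + (crossProduct w (Bb x) : V3))
      with hGdef
    have hGs : ContDiff ℝ (⊤ : ℕ∞) G := by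
      rw [hGdef]
      exact ((contDiff_slice_v hFs x).mul contDiff_dot_self).smul
        (contDiff_const.add (contDiff_cross contDiff_id contDiff_const))
    have hGsupp : HasCompactSupport G := by
      refine HasCompactSupport.intro (isCompact_closedBall (0:V3) Rm) fun v hv => ?_
      have hvn : Rm ≤ ‖v‖ := by
        by_contra hcon
        push_neg at hcon
        exact hv (by simpa [Metric.mem_closedBall, dist_zero_right] using hcon.le)
      simp only [hGdef]
      rw [hFz x v hvn]
      simp
    have hdivG := integral_div_compact G hGs hGsupp
    have hdiv_pt : ∀ v : V3, (∑ i : Fin 3, pd i (fun w => G w i) v)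
        = Bf (x, v) + (f0 x v + f1 x v) * (v ⬝ᵥ Eb x) := by
      intro v
      have hsd : DifferentiableAt ℝ (fun w : V3 => F x w * (w ⬝ᵥ w)) v := (hFv v).mul (hq v)
      have hcd : ∀ k : Fin 3,
          DifferentiableAt ℝ (fun w : V3 => (crossProduct w (Bb x) : V3) k) v :=
        fun k => diffAt_comp_proj (contDiff_cross contDiff_id contDiff_const) k v
      have hGi : ∀ k : Fin 3, (fun w => G w k)
          = fun w => (F x w * (w ⬝ᵥ w)) * (Eb x k + (crossProduct w (Bb x) : V3) k) := by
        intro k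
        funext w
        simp only [hGdef, Pi.smul_apply, Pi.add_apply, smul_eq_mul]
      have hmul : ∀ k : Fin 3,
          pd k (fun w => (F x w * (w ⬝ᵥ w)) * (Eb x k + (crossProduct w (Bb x) : V3) k)) v
            = pd k (fun w : V3 => F x w * (w ⬝ᵥ w)) v
                * (Eb x k + (crossProduct v (Bb x) : V3) k)
              + (F x v * (v ⬝ᵥ v))
                * pd k (fun w => Eb x k + (crossProduct w (Bb x) : V3) k) v :=
        fun k => pd_mul hsd ((differentiableAt_const _).add (hcd k)) k
      have hpds : ∀ k : Fin 3, pd k (fun w : V3 => F x w * (w ⬝ᵥ w)) v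
          = gradV F x v k * (v ⬝ᵥ v) + F x v * (2 * v k) := by
        intro k
        have h1 := pd_mul (g := fun w => F x w) (h := fun w : V3 => w ⬝ᵥ w) (hFv v) (hq v) k
        rw [h1, pd_dot_self]
        rfl
      have hpdc : ∀ k : Fin 3,
          pd k (fun w => Eb x k + (crossProduct w (Bb x) : V3) k) v
            = (crossProduct (Pi.single k 1 : V3) (Bb x) : V3) k := by
        intro k
        have h1 := pd_add (g := fun _ : V3 => Eb x k)
          (h := fun w : V3 => (crossProduct w (Bb x) : V3) k)
          (differentiableAt_const _) (hcd k) k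
        rw [h1, pd_const, pd_cross_const, zero_add]
      rw [Fin.sum_univ_three, hGi 0, hGi 1, hGi 2, hmul 0, hmul 1, hmul 2,
        hpds 0, hpds 1, hpds 2, hpdc 0, hpdc 1, hpdc 2]
      simp only [hBfdef, cross_apply, dotProduct, Fin.sum_univ_three, Pi.add_apply,
        Matrix.cons_val_zero, Matrix.cons_val_one, Matrix.head_cons, Matrix.cons_val_two,
        Matrix.tail_cons, Pi.single_apply]
      simp only [Fin.isValue, show ((0:Fin 3) = 1) = False by simp, show ((0:Fin 3) = 2) = False by simp,
        show ((1:Fin 3) = 0) = False by simp, show ((1:Fin 3) = 2) = False by simp,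
        show ((2:Fin 3) = 0) = False by simp, show ((2:Fin 3) = 1) = False by simp,
        if_true, if_false, ite_true, ite_false]
      ring
    have hcBx : Continuous fun v => Bf (x, v) := hcB.comp (Continuous.prodMk_right x)
    have hiBv : MeasureTheory.Integrable fun v => Bf (x, v) :=
      integrable_v (R := Rm + 1) _ hcBx fun v hv => hB0 x v hv
    have hcr : Continuous fun v : V3 => (f0 x v + f1 x v) * (v ⬝ᵥ Eb x) :=
      ((hf0s.continuous.comp (Continuous.prodMk_right x)).add
        (hf1s.continuous.comp (Continuous.prodMk_right x))).mul
        (continuous_dot continuous_id continuous_const)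
    have hir : MeasureTheory.Integrable fun v : V3 => (f0 x v + f1 x v) * (v ⬝ᵥ Eb x) :=
      integrable_v (R := Rm) _ hcr fun v hv => by
        rw [hR0 x v (le_trans (le_max_left _ _) hv), hR1 x v (le_trans (le_max_right _ _) hv)]
        ring
    have hint0 : ∀ i : Fin 3, MeasureTheory.Integrable fun v : V3 => f0 x v * v i := fun i =>
      integrable_v (R := Rm) _
        ((hf0s.continuous.comp (Continuous.prodMk_right x)).mul (continuous_apply i))
        (fun v hv => by rw [hR0 x v (le_trans (le_max_left _ _) hv)]; ring)
    have hint1 : ∀ i : Fin 3, MeasureTheory.Integrable fun v : V3 => f1 x v * v i := fun i =>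
      integrable_v (R := Rm) _
        ((hf1s.continuous.comp (Continuous.prodMk_right x)).mul (continuous_apply i))
        (fun v hv => by rw [hR1 x v (le_trans (le_max_right _ _) hv)]; ring)
    have hJc : ∀ (g : V3 → V3 → ℝ), Continuous (fun p : V3 × V3 => g p.1 p.2)
        → (∀ x' v : V3, Rm ≤ ‖v‖ → g x' v = 0) → ∀ i : Fin 3,
          (Jcur g x) i = ∫ v : V3, g x v * v i := by
      intro g hgc hgz i
      have hint : MeasureTheory.Integrable (fun v => (g x v • v : V3)) :=
        integrable_v (R := Rm) _ ((hgc.comp (Continuous.prodMk_right x)).smul continuous_id)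
          (fun v hv => by rw [hgz x v hv]; simp)
      exact ((ContinuousLinearMap.proj (R := ℝ) (φ := fun _ : Fin 3 => ℝ)
        i).integral_comp_comm hint).symm
    have hrJ : Eb x ⬝ᵥ (Jcur f0 x + Jcur f1 x)
        = ∫ v : V3, (f0 x v + f1 x v) * (v ⬝ᵥ Eb x) := by
      have e1 : Eb x ⬝ᵥ (Jcur f0 x + Jcur f1 x)
          = ∑ i : Fin 3, Eb x i * ((∫ v : V3, f0 x v * v i) + (∫ v : V3, f1 x v * v i)) := by
        simp only [dotProduct, Pi.add_apply]
        refine Finset.sum_congr rfl fun i _ => ?_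
        rw [hJc f0 hf0s.continuous (fun x' v hv => hR0 x' v (le_trans (le_max_left _ _) hv)) i,
          hJc f1 hf1s.continuous (fun x' v hv => hR1 x' v (le_trans (le_max_right _ _) hv)) i]
      have e2 : ∀ i : Fin 3,
          Eb x i * ((∫ v : V3, f0 x v * v i) + (∫ v : V3, f1 x v * v i))
            = ∫ v : V3, Eb x i * (f0 x v * v i + f1 x v * v i) := by
        intro i
        rw [← MeasureTheory.integral_add (hint0 i) (hint1 i),
          ← MeasureTheory.integral_const_mul]
      calc Eb x ⬝ᵥ (Jcur f0 x + Jcur f1 x)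
          = ∑ i : Fin 3, Eb x i * ((∫ v : V3, f0 x v * v i) + (∫ v : V3, f1 x v * v i)) := e1
        _ = ∑ i : Fin 3, ∫ v : V3, Eb x i * (f0 x v * v i + f1 x v * v i) :=
            Finset.sum_congr rfl fun i _ => e2 i
        _ = ∫ v : V3, ∑ i : Fin 3, Eb x i * (f0 x v * v i + f1 x v * v i) :=
            (MeasureTheory.integral_finset_sum _
              (fun i _ => ((hint0 i).add (hint1 i)).const_mul _)).symm
        _ = ∫ v : V3, (f0 x v + f1 x v) * (v ⬝ᵥ Eb x) := by
            refine MeasureTheory.integral_congr_ae (Filter.Eventually.of_forall fun v => ?_)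
            simp only [dotProduct, Fin.sum_univ_three]
            ring
    rw [funext hdiv_pt] at hdivG
    rw [MeasureTheory.integral_add hiBv hir, ← hrJ] at hdivG
    linarith
  have hBint : (∫ p, Bf p ∂P) = ∫ x, -(Eb x ⬝ᵥ (Jcur f0 x + Jcur f1 x)) ∂μb := by
    rw [MeasureTheory.integral_prod _ hiB, funext hBx]
  -- Ampère rewriting
  have hAmpere' : ∀ x : V3, Δt⁻¹ • (E1 x - En x)
      = curl Bb x - (2:ℝ)⁻¹ • (Jcur f0 x + Jcur f1 x) := by
    intro x
    exact hAmpere x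
  have hFaraday' : ∀ x : V3, Δt⁻¹ • (B1 x - Bn x) = -curl Eb x := by
    intro x
    exact hFaraday x
  set Tc : V3 → ℝ :=
    fun x => Eb x ⬝ᵥ ((2:ℝ) • (curl Bb x - Δt⁻¹ • (E1 x - En x))) with hTcdef
  have hcTc : Continuous Tc := by
    rw [hTcdef]
    exact continuous_dot hEbs.continuous
      (((continuous_curl hBbs).sub
        ((hE1s.continuous.sub hEns.continuous).const_smul Δt⁻¹)).const_smul (2:ℝ))
  have hTc : ∀ x : V3, Tc x = Eb x ⬝ᵥ (Jcur f0 x + Jcur f1 x) := by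
    intro x
    simp only [hTcdef]
    rw [hAmpere' x, sub_sub_cancel, smul_smul]
    norm_num
  -- kinetic energy balance
  have hkin : kinE L f1 - kinE L f0 = Δt * (∫ x, Tc x ∂μb) := by
    rw [hkdiff, hAint, hBint]
    have : (fun x => -(Eb x ⬝ᵥ (Jcur f0 x + Jcur f1 x))) = fun x => -Tc x := by
      funext x; rw [hTc x]
    rw [this, MeasureTheory.integral_neg]
    ring
  -- electric field energy balance
  have hEdiff : fieldE L E1 - fieldE L En
      = (2*Δt) * (∫ x, Eb x ⬝ᵥ curl Bb x ∂μb) - Δt * (∫ x, Tc x ∂μb) := by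
    have hE : ∀ x : V3, E1 x - En x
        = Δt • (curl Bb x - (2:ℝ)⁻¹ • (Jcur f0 x + Jcur f1 x)) := by
      intro x
      rw [← hAmpere' x, smul_smul, mul_inv_cancel₀ hΔt.ne', one_smul]
    have hpt2 : ∀ x : V3, E1 x ⬝ᵥ E1 x - En x ⬝ᵥ En x
        = (2*Δt) * (Eb x ⬝ᵥ curl Bb x) - Δt * Tc x := by
      intro x
      have h0 := congrFun (hE x) 0
      have h1 := congrFun (hE x) 1
      have h2 := congrFun (hE x) 2
      simp only [Pi.sub_apply, Pi.smul_apply, Pi.add_apply, smul_eq_mul] at h0 h1 h2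
      rw [hTc x]
      simp only [hEbdef, dotProduct, Fin.sum_univ_three, Pi.smul_apply, Pi.add_apply,
        smul_eq_mul]
      linear_combination (E1 x 0 + En x 0) * h0 + (E1 x 1 + En x 1) * h1
        + (E1 x 2 + En x 2) * h2
    rw [fieldE, fieldE, ← hμb,
      ← MeasureTheory.integral_sub (hintb _ (continuous_dot hE1s.continuous hE1s.continuous))
        (hintb _ (continuous_dot hEns.continuous hEns.continuous)),
      funext hpt2,
      MeasureTheory.integral_sub
        (hintb _ (continuous_const.fun_mul (continuous_dot hEbs.continuous (continuous_curl hBbs))))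
        (hintb _ (continuous_const.fun_mul hcTc)),
      MeasureTheory.integral_const_mul, MeasureTheory.integral_const_mul]
  -- magnetic field energy balance
  have hBdiff : fieldE L B1 - fieldE L Bn
      = -((2*Δt) * (∫ x, Bb x ⬝ᵥ curl Eb x ∂μb)) := by
    have hB : ∀ x : V3, B1 x - Bn x = Δt • (-curl Eb x) := by
      intro x
      rw [← hFaraday' x, smul_smul, mul_inv_cancel₀ hΔt.ne', one_smul]
    have hpt3 : ∀ x : V3, B1 x ⬝ᵥ B1 x - Bn x ⬝ᵥ Bn x
        = -((2*Δt) * (Bb x ⬝ᵥ curl Eb x)) := by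
      intro x
      have h0 := congrFun (hB x) 0
      have h1 := congrFun (hB x) 1
      have h2 := congrFun (hB x) 2
      simp only [Pi.sub_apply, Pi.smul_apply, Pi.add_apply, Pi.neg_apply, smul_eq_mul]
        at h0 h1 h2
      simp only [hBbdef, dotProduct, Fin.sum_univ_three, Pi.smul_apply, Pi.add_apply,
        smul_eq_mul]
      linear_combination (B1 x 0 + Bn x 0) * h0 + (B1 x 1 + Bn x 1) * h1
        + (B1 x 2 + Bn x 2) * h2
    rw [fieldE, fieldE, ← hμb,
      ← MeasureTheory.integral_sub (hintb _ (continuous_dot hB1s.continuous hB1s.continuous))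
        (hintb _ (continuous_dot hBns.continuous hBns.continuous)),
      funext hpt3, MeasureTheory.integral_neg, MeasureTheory.integral_const_mul]
  -- integration by parts for the curl terms
  have hIBP : (∫ x, Eb x ⬝ᵥ curl Bb x ∂μb) = ∫ x, Bb x ⬝ᵥ curl Eb x ∂μb := by
    have hW : ContDiff ℝ (⊤ : ℕ∞) fun y : V3 => (crossProduct (Eb y) (Bb y) : V3) :=
      contDiff_cross hEbs hBbs
    have hWp : ∀ (x : V3) (i : Fin 3),
        (fun y : V3 => (crossProduct (Eb y) (Bb y) : V3)) (x + L • (Pi.single i (1:ℝ) : V3))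
          = (fun y : V3 => (crossProduct (Eb y) (Bb y) : V3)) x := by
      intro x i
      simp only []
      rw [hEbp x i, hBbp x i]
    have h := integral_div_box_periodic hL.le _ hW hWp
    rw [funext (fun x => div_cross Eb Bb hEbs hBbs x), ← hμb,
      MeasureTheory.integral_sub
        (hintb _ (continuous_dot hBbs.continuous (continuous_curl hEbs)))
        (hintb _ (continuous_dot hEbs.continuous (continuous_curl hBbs)))] at h
    linarith
  linear_combination hkin + hEdiff + hBdiff + (2*Δt) * hIBP
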